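/- Fix an integer m ≥ 2 and a real δ > 0, and let ζ ∈ (0,1/10]. Set b_1 = (χ−1/2) log(1/(1−ζ)), b_2 = (χ−1/2) log(1/(3ζ)). Then for every integer k ≥ 1, I_k(ζ) ≥ 3ζ · (2/(2χ−1))^{k+1} · J_k(ζ), where I_k(ζ) = ∑_{(q_0,…,q_k) ∈ {O,Y}^{k+1}} ∫_{[3ζ,1−ζ]^{k+1}} ∏_{i=1}^{k} κ((y_{i−1},q_{i−1}),(y_i,q_i)) dy_0⋯dy_k and J_k(ζ) = ∑_{(q_0,…,q_k) ∈ {O,Y}^{k+1}} ∫_{ℝ^{k+1}} ∏_{i=1}^{k} κ̃_ζ((x_{i−1},q_{i−1}),(x_i,q_i)) dx_0⋯dx_k. -/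

import Mathlib

open MeasureTheory Filter Set
open scoped ENNReal NNReal Classical

noncomputable section

namespace PAPaper

/-- The exponential growth parameter `ν` of the Pólya point tree. -/
def nuConst (m : ℕ) (δ : ℝ) : ℝ :=
  2 * (((m : ℝ) * ((m : ℝ) + δ) +
      Real.sqrt ((m : ℝ) * ((m : ℝ) - 1) * ((m : ℝ) + δ) * ((m : ℝ) + 1 + δ))) / δ)

/-- `χ = (m+δ)/(2m+δ)`. -/
def chiC (m : ℕ) (δ : ℝ) : ℝ := ((m : ℝ) + δ) / (2 * (m : ℝ) + δ)

/-- The labels `O` (old) and `Y` (young) of the Pólya point tree. -/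
inductive Label : Type
  | O : Label
  | Y : Label
deriving DecidableEq

instance : Fintype Label :=
  ⟨{Label.O, Label.Y}, fun x => by cases x <;> simp⟩

/-- The constants `c_{st}` of the offspring kernel. -/
def cst (m : ℕ) (δ : ℝ) : Label → Label → ℝ
  | .O, .O => (m : ℝ) * ((m : ℝ) + δ) / (2 * (m : ℝ) + δ)
  | .O, .Y => (m : ℝ) * ((m : ℝ) + 1 + δ) / (2 * (m : ℝ) + δ)
  | .Y, .O => ((m : ℝ) - 1) * ((m : ℝ) + δ) / (2 * (m : ℝ) + δ)
  | .Y, .Y => (m : ℝ) * ((m : ℝ) + δ) / (2 * (m : ℝ) + δ)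

/-- The offspring kernel `κ((x,s),(y,t))` of the Pólya point tree. -/
def ker (m : ℕ) (δ : ℝ) (p q : ℝ × Label) : ℝ :=
  cst m δ p.2 q.2 *
    ((if q.1 < p.1 ∧ q.2 = Label.O then 1 else 0) +
      (if p.1 < q.1 ∧ q.2 = Label.Y then 1 else 0)) /
    (max p.1 q.1 ^ chiC m δ * min p.1 q.1 ^ (1 - chiC m δ))

/-- The entries of a `(k+1)`-tuple, as a function of a natural number index. -/
def app {k : ℕ} {α : Type*} (f : Fin (k + 1) → α) (i : ℕ) : α :=
  f ⟨min i k, Nat.lt_succ_of_le (Nat.min_le_right i k)⟩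

/-- The label sequence of a path of vertices: `lb_0` is the prescribed label, and
`lb_i = O` if `π_i ≤ π_{i-1}`, `lb_i = Y` otherwise. -/
def lbl {k : ℕ} (lb0 : Label) (π : Fin (k + 1) → ℕ) (i : ℕ) : Label :=
  if i = 0 then lb0 else if app π i ≤ app π (i - 1) then Label.O else Label.Y

/-- `I_k(ζ) = ⟨1, T_{κ°ζ}^k 1⟩`: the integral of the `k`-fold kernel product over the
box `[3ζ, 1-ζ]^{k+1}`, summed over all label sequences. -/
def Iker (m : ℕ) (δ : ℝ) (ζ : ℝ) (k : ℕ) : ℝ :=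
  ∑ q : Fin (k + 1) → Label,
    ∫ y in Set.univ.pi fun _ : Fin (k + 1) => Set.Icc (3 * ζ) (1 - ζ),
      ∏ i ∈ Finset.Icc 1 k, ker m δ (app y (i - 1), app q (i - 1)) (app y i, app q i)

/-- `b_1 = (χ - 1/2) log(1/(1-ζ))`. -/
def b1C (m : ℕ) (δ ζ : ℝ) : ℝ := (chiC m δ - 1 / 2) * Real.log (1 / (1 - ζ))

/-- `b_2 = (χ - 1/2) log(1/(3ζ))`. -/
def b2C (m : ℕ) (δ ζ : ℝ) : ℝ := (chiC m δ - 1 / 2) * Real.log (1 / (3 * ζ))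

/-- The transformed kernel `κ̃_ζ` on `(ℝ × {O,Y})²` obtained from `κ°ζ` via the isometric
substitution `y = e^{-x/(χ - 1/2)}`. -/
def kerT (m : ℕ) (δ ζ : ℝ) (p q : ℝ × Label) : ℝ :=
  cst m δ p.2 q.2 *
    ((if p.1 < q.1 ∧ q.2 = Label.O then 1 else 0) +
      (if q.1 < p.1 ∧ q.2 = Label.Y then 1 else 0)) *
    Real.exp (-|p.1 - q.1|) *
    (if b1C m δ ζ ≤ p.1 ∧ p.1 ≤ b2C m δ ζ ∧ b1C m δ ζ ≤ q.1 ∧ q.1 ≤ b2C m δ ζ then 1 else 0)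

/-- `J_k(ζ) = ⟨1, T_{κ̃_ζ}^k 1⟩`: integral of the `k`-fold transformed kernel product over
`ℝ^{k+1}`, summed over all label sequences. -/
def Jker (m : ℕ) (δ ζ : ℝ) (k : ℕ) : ℝ :=
  ∑ q : Fin (k + 1) → Label,
    ∫ x : Fin (k + 1) → ℝ,
      ∏ i ∈ Finset.Icc 1 k, kerT m δ ζ (app x (i - 1), app q (i - 1)) (app x i, app q i)

/-! ### Auxiliary lemmas -/

section Aux
variable {m : ℕ} {δ ζ : ℝ}

lemma hm2R (hm : 2 ≤ m) : (2:ℝ) ≤ (m:ℝ) := by exact_mod_cast hm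

lemma denom_pos (hm : 2 ≤ m) (hδ : 0 < δ) : 0 < 2*(m:ℝ)+δ := by
  have := hm2R hm; linarith

lemma chi_gt (hm : 2 ≤ m) (hδ : 0 < δ) : 1/2 < chiC m δ := by
  have h := denom_pos hm hδ
  rw [chiC, lt_div_iff₀ h]; linarith

lemma chi_lt_one (hm : 2 ≤ m) (hδ : 0 < δ) : chiC m δ < 1 := by
  have h := denom_pos hm hδ
  have := hm2R hm
  rw [chiC, div_lt_one h]; linarith

lemma cC_pos (hm : 2 ≤ m) (hδ : 0 < δ) : 0 < chiC m δ - 1/2 := by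
  have := chi_gt hm hδ; linarith

/-- The substitution `x = ψ(y) = -(χ-1/2) log y`. -/
def psiF (m : ℕ) (δ : ℝ) (y : ℝ) : ℝ := -((chiC m δ - 1 / 2) * Real.log y)

lemma psiF_one_sub (hζ1 : ζ < 1) : psiF m δ (1 - ζ) = b1C m δ ζ := by
  have h : Real.log (1/(1-ζ)) = -Real.log (1-ζ) := by rw [one_div, Real.log_inv]
  rw [psiF, b1C, h]; ring

lemma psiF_three (hζ0 : 0 < ζ) : psiF m δ (3 * ζ) = b2C m δ ζ := by
  have h : Real.log (1/(3*ζ)) = -Real.log (3*ζ) := by rw [one_div, Real.log_inv]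
  rw [psiF, b2C, h]; ring

lemma psiF_anti (hm : 2 ≤ m) (hδ : 0 < δ) {a b : ℝ} (ha : 0 < a) (hab : a ≤ b) :
    psiF m δ b ≤ psiF m δ a := by
  have hc := cC_pos hm hδ
  have := Real.log_le_log ha hab
  rw [psiF, psiF, neg_le_neg_iff]
  nlinarith

lemma psiF_lt_iff (hm : 2 ≤ m) (hδ : 0 < δ) {a b : ℝ} (ha : 0 < a) (hb : 0 < b) :
    psiF m δ a < psiF m δ b ↔ b < a := by
  have hc := cC_pos hm hδ
  rw [psiF, psiF, neg_lt_neg_iff, mul_lt_mul_iff_right₀ hc, Real.log_lt_log_iff hb ha]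

lemma psiF_mem (hm : 2 ≤ m) (hδ : 0 < δ) (hζ : ζ ∈ Set.Ioc (0:ℝ) (1/10)) {y : ℝ}
    (hy : y ∈ Set.Icc (3*ζ) (1-ζ)) : psiF m δ y ∈ Set.Icc (b1C m δ ζ) (b2C m δ ζ) := by
  obtain ⟨hζ0, hζ1⟩ := hζ
  have h3 : 0 < 3*ζ := by linarith
  have hy0 : 0 < y := lt_of_lt_of_le h3 hy.1
  constructor
  · rw [← psiF_one_sub (by linarith)]
    exact psiF_anti hm hδ hy0 hy.2
  · rw [← psiF_three hζ0]
    exact psiF_anti hm hδ h3 hy.1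

lemma exp_abs_psi (hm : 2 ≤ m) (hδ : 0 < δ) {y y' : ℝ} (hy : 0 < y) (hle : y ≤ y') :
    Real.exp (-|psiF m δ y - psiF m δ y'|) * (y' ^ chiC m δ * y ^ (1 - chiC m δ))
      = Real.sqrt (y * y') := by
  have hy' : 0 < y' := lt_of_lt_of_le hy hle
  have hc := cC_pos hm hδ
  have hlog : Real.log y ≤ Real.log y' := Real.log_le_log hy hle
  have habs : |psiF m δ y - psiF m δ y'|
      = (chiC m δ - 1/2) * (Real.log y' - Real.log y) := by
    rw [abs_of_nonneg]
    · simp [psiF]; ring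
    · simp only [psiF]; nlinarith
  rw [habs, Real.sqrt_eq_rpow, Real.rpow_def_of_pos (mul_pos hy hy'),
    Real.log_mul (ne_of_gt hy) (ne_of_gt hy'),
    Real.rpow_def_of_pos hy', Real.rpow_def_of_pos hy, ← Real.exp_add, ← Real.exp_add]
  congr 1
  ring

/-- The key kernel identity: the transformed kernel at `ψ(y), ψ(y')` equals the original
kernel times `√(y y')`. -/
lemma kerT_psi (hm : 2 ≤ m) (hδ : 0 < δ) (hζ : ζ ∈ Set.Ioc (0:ℝ) (1/10)) {y y' : ℝ}
    (hy : y ∈ Set.Icc (3*ζ) (1-ζ)) (hy' : y' ∈ Set.Icc (3*ζ) (1-ζ)) (s t : Label) :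
    kerT m δ ζ (psiF m δ y, s) (psiF m δ y', t)
      = ker m δ (y, s) (y', t) * Real.sqrt (y * y') := by
  have h3 : 0 < 3*ζ := by linarith [hζ.1]
  have hy0 : 0 < y := lt_of_lt_of_le h3 hy.1
  have hy'0 : 0 < y' := lt_of_lt_of_le h3 hy'.1
  have hmem := psiF_mem hm hδ hζ hy
  have hmem' := psiF_mem hm hδ hζ hy'
  have hbox : (if b1C m δ ζ ≤ psiF m δ y ∧ psiF m δ y ≤ b2C m δ ζ ∧
      b1C m δ ζ ≤ psiF m δ y' ∧ psiF m δ y' ≤ b2C m δ ζ then (1:ℝ) else 0) = 1 :=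
    if_pos ⟨hmem.1, hmem.2, hmem'.1, hmem'.2⟩
  have hED : Real.exp (-|psiF m δ y - psiF m δ y'|) *
      (max y y' ^ chiC m δ * min y y' ^ (1 - chiC m δ)) = Real.sqrt (y * y') := by
    rcases le_total y y' with h | h
    · rw [max_eq_right h, min_eq_left h]; exact exp_abs_psi hm hδ hy0 h
    · rw [max_eq_left h, min_eq_right h, abs_sub_comm, mul_comm y y']
      exact exp_abs_psi hm hδ hy'0 h
  have hD : 0 < max y y' ^ chiC m δ * min y y' ^ (1 - chiC m δ) :=
    mul_pos (Real.rpow_pos_of_pos (lt_max_of_lt_left hy0) _)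
      (Real.rpow_pos_of_pos (lt_min hy0 hy'0) _)
  rw [kerT, ker]
  simp only [psiF_lt_iff hm hδ hy0 hy'0, psiF_lt_iff hm hδ hy'0 hy0, hbox, mul_one]
  rw [← hED]
  field_simp

end Aux
section Aux2
variable {m : ℕ} {δ ζ : ℝ}

lemma app_val {k : ℕ} {α : Type*} (y : Fin (k+1) → α) (i : Fin (k+1)) :
    app y i.val = y i := by
  unfold app
  congr 1
  exact Fin.ext (by simp [Nat.min_eq_left (Nat.lt_succ_iff.mp i.isLt)])

lemma app_mem {k : ℕ} {y : Fin (k+1) → ℝ} {S : Set ℝ} (hy : ∀ i, y i ∈ S) (j : ℕ) :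
    app y j ∈ S := hy _

/-- Telescoping product of square roots. -/
lemma sqrt_prod_tel (g : ℕ → ℝ) (hg : ∀ i, 0 < g i) (k : ℕ) :
    Real.sqrt (g 0 * g k) * ∏ i ∈ Finset.Icc 1 k, Real.sqrt (g (i-1) * g i)
      = ∏ i ∈ Finset.range (k+1), g i := by
  induction k with
  | zero => simp [Real.sqrt_mul_self (hg 0).le]
  | succ n ih =>
      rw [Finset.prod_range_succ, ← ih,
        Finset.prod_Icc_succ_top (Nat.succ_le_succ (Nat.zero_le n))]
      simp only [Nat.add_sub_cancel]
      have key : Real.sqrt (g 0 * g (n+1)) * Real.sqrt (g n * g (n+1))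
          = Real.sqrt (g 0 * g n) * g (n+1) := by
        have h1 : Real.sqrt (g 0 * g (n+1)) * Real.sqrt (g n * g (n+1))
            = Real.sqrt ((g 0 * g n) * (g (n+1))^2) := by
          rw [← Real.sqrt_mul (mul_pos (hg 0) (hg (n+1))).le]; ring_nf
        rw [h1, Real.sqrt_mul (mul_pos (hg 0) (hg n)).le, Real.sqrt_sq (hg (n+1)).le]
      linear_combination (∏ i ∈ Finset.Icc 1 n, Real.sqrt (g (i-1) * g i)) * key

end Aux2
section Aux3
variable {m : ℕ} {δ ζ : ℝ}

lemma measurable_app {k : ℕ} {α : Type*} [MeasurableSpace α] (j : ℕ) :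
    Measurable fun y : Fin (k+1) → α => app y j := by
  unfold app; exact measurable_pi_apply _

lemma msetAnd {α : Type*} [MeasurableSpace α] {P : α → Prop}
    (h : MeasurableSet {x | P x}) (Q : Prop) : MeasurableSet {x | P x ∧ Q} := by
  classical
  by_cases hq : Q
  · simpa [hq] using h
  · simp [hq]

lemma measurable_kerfac (hm : 2 ≤ m) (hδ : 0 < δ) (k : ℕ) (q : Fin (k+1) → Label) (i : ℕ) :
    Measurable (fun y : Fin (k+1) → ℝ =>
      ker m δ (app y (i-1), app q (i-1)) (app y i, app q i)) := by
  have hχ0 : (0:ℝ) ≤ chiC m δ := by linarith [chi_gt hm hδ]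
  have h1χ0 : (0:ℝ) ≤ 1 - chiC m δ := by linarith [chi_lt_one hm hδ]
  have ha : Measurable fun y : Fin (k+1) → ℝ => app y (i-1) := measurable_app _
  have hb : Measurable fun y : Fin (k+1) → ℝ => app y i := measurable_app _
  simp only [ker]
  exact (measurable_const.mul
      ((Measurable.ite (msetAnd (measurableSet_lt hb ha) _) measurable_const
          measurable_const).add
        (Measurable.ite (msetAnd (measurableSet_lt ha hb) _) measurable_const
          measurable_const))).div
    (((Real.continuous_rpow_const hχ0).measurable.comp (ha.max hb)).mul
      ((Real.continuous_rpow_const h1χ0).measurable.comp (ha.min hb)))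

lemma measurable_kerTfac (k : ℕ) (q : Fin (k+1) → Label) (i : ℕ) :
    Measurable (fun x : Fin (k+1) → ℝ =>
      kerT m δ ζ (app x (i-1), app q (i-1)) (app x i, app q i)) := by
  have ha : Measurable fun y : Fin (k+1) → ℝ => app y (i-1) := measurable_app _
  have hb : Measurable fun y : Fin (k+1) → ℝ => app y i := measurable_app _
  simp only [kerT]
  refine ((measurable_const.mul
      ((Measurable.ite (msetAnd (measurableSet_lt ha hb) _) measurable_const
          measurable_const).add
        (Measurable.ite (msetAnd (measurableSet_lt hb ha) _) measurable_const
          measurable_const))).mul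
    (Real.measurable_exp.comp ((ha.sub hb).abs.neg))).mul
    (Measurable.ite ?_ measurable_const measurable_const)
  exact (measurableSet_le measurable_const ha).inter
    ((measurableSet_le ha measurable_const).inter
      ((measurableSet_le measurable_const hb).inter
        (measurableSet_le hb measurable_const)))

lemma measurable_kerprod (hm : 2 ≤ m) (hδ : 0 < δ) (k : ℕ) (q : Fin (k+1) → Label) :
    Measurable (fun y : Fin (k+1) → ℝ =>
      ∏ i ∈ Finset.Icc 1 k, ker m δ (app y (i-1), app q (i-1)) (app y i, app q i)) :=
  Finset.measurable_prod _ fun i _ => measurable_kerfac hm hδ k q i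

lemma measurable_kerTprod (k : ℕ) (q : Fin (k+1) → Label) :
    Measurable (fun x : Fin (k+1) → ℝ =>
      ∏ i ∈ Finset.Icc 1 k, kerT m δ ζ (app x (i-1), app q (i-1)) (app x i, app q i)) :=
  Finset.measurable_prod _ fun i _ => measurable_kerTfac k q i

end Aux3
section Aux4
variable {m : ℕ} {δ ζ : ℝ}

lemma cst_nonneg (hm : 2 ≤ m) (hδ : 0 < δ) (s t : Label) : 0 ≤ cst m δ s t := by
  have h := denom_pos hm hδ
  have h2 := hm2R hm
  cases s <;> cases t <;> (simp only [cst]; apply div_nonneg <;> nlinarith)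

lemma cst_le (hm : 2 ≤ m) (hδ : 0 < δ) (s t : Label) :
    cst m δ s t ≤ (m:ℝ) * ((m:ℝ) + 1 + δ) := by
  have h := denom_pos hm hδ
  have h2 := hm2R hm
  have h1 : (1:ℝ) ≤ 2*(m:ℝ)+δ := by linarith
  cases s <;> cases t <;>
    (simp only [cst];
     refine le_trans (div_le_self (by nlinarith) h1) (by nlinarith))

lemma indsum_nonneg (P Q : Prop) [Decidable P] [Decidable Q] :
    (0:ℝ) ≤ (if P then (1:ℝ) else 0) + (if Q then (1:ℝ) else 0) := by positivity

lemma indsum_le (P Q : Prop) [Decidable P] [Decidable Q] :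
    (if P then (1:ℝ) else 0) + (if Q then (1:ℝ) else 0) ≤ 2 := by
  have : (if P then (1:ℝ) else 0) ≤ 1 := by split <;> norm_num
  have : (if Q then (1:ℝ) else 0) ≤ 1 := by split <;> norm_num
  linarith

lemma kerT_nonneg (hm : 2 ≤ m) (hδ : 0 < δ) (p q : ℝ × Label) :
    0 ≤ kerT m δ ζ p q := by
  rw [kerT]
  refine mul_nonneg (mul_nonneg (mul_nonneg (cst_nonneg hm hδ _ _) (indsum_nonneg _ _))
    (Real.exp_pos _).le) (by positivity)

lemma kerT_le (hm : 2 ≤ m) (hδ : 0 < δ) (p q : ℝ × Label) :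
    kerT m δ ζ p q ≤ (m:ℝ) * ((m:ℝ) + 1 + δ) * 2 := by
  rw [kerT]
  have hc0 := cst_nonneg hm hδ p.2 q.2
  have hc1 := cst_le hm hδ p.2 q.2
  have hi0 := indsum_nonneg (p.1 < q.1 ∧ q.2 = Label.O) (q.1 < p.1 ∧ q.2 = Label.Y)
  have hi1 := indsum_le (p.1 < q.1 ∧ q.2 = Label.O) (q.1 < p.1 ∧ q.2 = Label.Y)
  have he0 := (Real.exp_pos (-|p.1 - q.1|)).le
  have he1 : Real.exp (-|p.1 - q.1|) ≤ 1 := Real.exp_le_one_iff.mpr (neg_nonpos.mpr (abs_nonneg _))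
  have hb0 : (0:ℝ) ≤ (if b1C m δ ζ ≤ p.1 ∧ p.1 ≤ b2C m δ ζ ∧ b1C m δ ζ ≤ q.1 ∧ q.1 ≤ b2C m δ ζ
      then (1:ℝ) else 0) := by positivity
  have hb1 : (if b1C m δ ζ ≤ p.1 ∧ p.1 ≤ b2C m δ ζ ∧ b1C m δ ζ ≤ q.1 ∧ q.1 ≤ b2C m δ ζ
      then (1:ℝ) else 0) ≤ 1 := by split <;> norm_num
  calc cst m δ p.2 q.2 * _ * _ * _
      ≤ (m:ℝ) * ((m:ℝ) + 1 + δ) * 2 * 1 * 1 := by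
        apply mul_le_mul
        apply mul_le_mul
        apply mul_le_mul hc1 hi1 hi0 (by nlinarith)
        exact he1
        exact he0
        positivity
        exact hb1
        exact hb0
        positivity
    _ = (m:ℝ) * ((m:ℝ) + 1 + δ) * 2 := by ring

lemma ker_nonneg_on (hm : 2 ≤ m) (hδ : 0 < δ) {p q : ℝ × Label}
    (hp : 0 < p.1) (hq : 0 < q.1) : 0 ≤ ker m δ p q := by
  rw [ker]
  have hD : 0 < max p.1 q.1 ^ chiC m δ * min p.1 q.1 ^ (1 - chiC m δ) :=
    mul_pos (Real.rpow_pos_of_pos (lt_max_of_lt_left hp) _)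
      (Real.rpow_pos_of_pos (lt_min hp hq) _)
  exact div_nonneg (mul_nonneg (cst_nonneg hm hδ _ _) (indsum_nonneg _ _)) hD.le

lemma ker_le_on (hm : 2 ≤ m) (hδ : 0 < δ) (hζ : ζ ∈ Set.Ioc (0:ℝ) (1/10)) {p q : ℝ × Label}
    (hp : p.1 ∈ Set.Icc (3*ζ) (1-ζ)) (hq : q.1 ∈ Set.Icc (3*ζ) (1-ζ)) :
    ker m δ p q ≤ (m:ℝ) * ((m:ℝ) + 1 + δ) * 2 / (9 * ζ^2) := by
  obtain ⟨hζ0, hζ1⟩ := hζ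
  have h3 : (0:ℝ) < 3*ζ := by linarith
  have hχ := chi_gt hm hδ
  have hχ1 := chi_lt_one hm hδ
  have hmax0 : 0 < max p.1 q.1 := lt_max_of_lt_left (lt_of_lt_of_le h3 hp.1)
  have hmax1 : max p.1 q.1 ≤ 1 := max_le (le_trans hp.2 (by linarith)) (le_trans hq.2 (by linarith))
  have hmin0 : 0 < min p.1 q.1 := lt_min (lt_of_lt_of_le h3 hp.1) (lt_of_lt_of_le h3 hq.1)
  have hmin1 : min p.1 q.1 ≤ 1 := le_trans (min_le_left _ _) (le_trans hp.2 (by linarith))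
  have h1 : (3*ζ) ≤ max p.1 q.1 ^ chiC m δ := by
    calc (3*ζ) ≤ max p.1 q.1 := le_max_of_le_left hp.1
    _ = max p.1 q.1 ^ (1:ℝ) := (Real.rpow_one _).symm
    _ ≤ max p.1 q.1 ^ chiC m δ :=
        Real.rpow_le_rpow_of_exponent_ge hmax0 hmax1 (by linarith)
  have h2 : (3*ζ) ≤ min p.1 q.1 ^ (1 - chiC m δ) := by
    calc (3*ζ) ≤ min p.1 q.1 := le_min hp.1 hq.1
    _ = min p.1 q.1 ^ (1:ℝ) := (Real.rpow_one _).symm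
    _ ≤ min p.1 q.1 ^ (1 - chiC m δ) :=
        Real.rpow_le_rpow_of_exponent_ge hmin0 hmin1 (by linarith)
  have hD : 9 * ζ^2 ≤ max p.1 q.1 ^ chiC m δ * min p.1 q.1 ^ (1 - chiC m δ) := by
    calc 9*ζ^2 = (3*ζ) * (3*ζ) := by ring
    _ ≤ _ := mul_le_mul h1 h2 (by linarith) (by positivity)
  rw [ker]
  refine div_le_div₀ (by positivity) ?_ (by positivity) hD
  have := cst_le hm hδ p.2 q.2
  have := cst_nonneg hm hδ p.2 q.2
  have := indsum_le (q.1 < p.1 ∧ q.2 = Label.O) (p.1 < q.1 ∧ q.2 = Label.Y)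
  have := indsum_nonneg (q.1 < p.1 ∧ q.2 = Label.O) (p.1 < q.1 ∧ q.2 = Label.Y)
  nlinarith

end Aux4
section Aux5
variable {m : ℕ} {δ ζ : ℝ}

lemma det_pi_smul_proj {n : ℕ} (d : Fin n → ℝ) :
    (ContinuousLinearMap.pi fun i : Fin n =>
      d i • ContinuousLinearMap.proj (R := ℝ) (φ := fun _ : Fin n => ℝ) i).det
      = ∏ i, d i := by
  have h : ((ContinuousLinearMap.pi fun i : Fin n =>
      d i • ContinuousLinearMap.proj (R := ℝ) (φ := fun _ : Fin n => ℝ) i :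
        (Fin n → ℝ) →L[ℝ] (Fin n → ℝ)) : (Fin n → ℝ) →ₗ[ℝ] (Fin n → ℝ))
      = Matrix.toLin' (Matrix.diagonal d) := by
    apply LinearMap.ext; intro x
    funext j
    simp [Matrix.toLin'_apply, Matrix.mulVec_diagonal, mul_comm]
  rw [ContinuousLinearMap.det, h, LinearMap.det_toLin', Matrix.det_diagonal]

lemma hasDerivAt_psiF {t : ℝ} (ht : t ≠ 0) :
    HasDerivAt (psiF m δ) (-((chiC m δ - 1/2) * t⁻¹)) t := by
  unfold psiF
  exact ((Real.hasDerivAt_log ht).const_mul (chiC m δ - 1/2)).neg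

end Aux5
section Aux6
variable {m : ℕ} {δ ζ : ℝ}

lemma image_box (hm : 2 ≤ m) (hδ : 0 < δ) (hζ : ζ ∈ Set.Ioc (0:ℝ) (1/10)) (k : ℕ) :
    (fun y : Fin (k+1) → ℝ => fun i => psiF m δ (y i)) ''
        (Set.univ.pi fun _ : Fin (k+1) => Set.Icc (3*ζ) (1-ζ))
      = Set.univ.pi fun _ : Fin (k+1) => Set.Icc (b1C m δ ζ) (b2C m δ ζ) := by
  obtain ⟨hζ0, hζ1⟩ := hζ
  have h3 : (0:ℝ) < 3*ζ := by linarith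
  have hc := cC_pos hm hδ
  ext x
  simp only [Set.mem_image, Set.mem_univ_pi, Set.mem_Icc]
  constructor
  · rintro ⟨y, hy, rfl⟩ i
    exact psiF_mem hm hδ ⟨hζ0, hζ1⟩ (Set.mem_Icc.mpr (hy i))
  · intro hx
    refine ⟨fun i => Real.exp (-(x i)/(chiC m δ - 1/2)), fun i => ?_, funext fun i => ?_⟩
    · have h1 := (hx i).1
      have h2 := (hx i).2
      have hb2 : b2C m δ ζ = (chiC m δ - 1/2) * (- Real.log (3*ζ)) := by
        rw [b2C, show Real.log (1/(3*ζ)) = -Real.log (3*ζ) by rw [one_div, Real.log_inv]]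
      have hb1 : b1C m δ ζ = (chiC m δ - 1/2) * (- Real.log (1-ζ)) := by
        rw [b1C, show Real.log (1/(1-ζ)) = -Real.log (1-ζ) by rw [one_div, Real.log_inv]]
      constructor
      · have hlog : Real.log (3*ζ) ≤ -(x i)/(chiC m δ - 1/2) := by
          rw [le_div_iff₀ hc]
          rw [hb2] at h2; nlinarith
        calc 3*ζ = Real.exp (Real.log (3*ζ)) := (Real.exp_log h3).symm
        _ ≤ _ := Real.exp_le_exp.mpr hlog
      · have hlog : -(x i)/(chiC m δ - 1/2) ≤ Real.log (1-ζ) := by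
          rw [div_le_iff₀ hc]
          rw [hb1] at h1; nlinarith
        calc Real.exp (-(x i)/(chiC m δ - 1/2)) ≤ Real.exp (Real.log (1-ζ)) :=
              Real.exp_le_exp.mpr hlog
        _ = 1-ζ := Real.exp_log (by linarith)
    · rw [psiF, Real.log_exp]
      have hne : chiC m δ * 2 - 1 ≠ 0 := by intro h; nlinarith
      field_simp [ne_of_gt hc]

lemma kerTprod_vanish (k : ℕ) (hk : 1 ≤ k) (q : Fin (k+1) → Label) {x : Fin (k+1) → ℝ}
    (hx : x ∉ Set.univ.pi fun _ : Fin (k+1) => Set.Icc (b1C m δ ζ) (b2C m δ ζ)) :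
    ∏ i ∈ Finset.Icc 1 k, kerT m δ ζ (app x (i-1), app q (i-1)) (app x i, app q i) = 0 := by
  have hex : ∃ i : Fin (k+1), ¬ (b1C m δ ζ ≤ x i ∧ x i ≤ b2C m δ ζ) := by
    by_contra h
    push_neg at h
    exact hx fun i _ => Set.mem_Icc.mpr (h i)
  obtain ⟨i, hi⟩ := hex
  have hik : i.val ≤ k := Nat.lt_succ_iff.mp i.isLt
  rcases Nat.eq_zero_or_pos i.val with h0 | h0
  · refine Finset.prod_eq_zero (Finset.mem_Icc.mpr ⟨le_refl 1, hk⟩) ?_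
    have happ : app x (1-1) = x i := by
      show app x 0 = x i
      unfold app; congr 1
      exact Fin.ext (by simpa using h0.symm)
    have hcond : ¬ (b1C m δ ζ ≤ (app x (1-1), app q (1-1)).1 ∧
        (app x (1-1), app q (1-1)).1 ≤ b2C m δ ζ ∧
        b1C m δ ζ ≤ (app x 1, app q 1).1 ∧ (app x 1, app q 1).1 ≤ b2C m δ ζ) := by
      rintro ⟨ha, hb, -, -⟩
      exact hi ⟨by rwa [happ] at ha, by rwa [happ] at hb⟩
    simp only [kerT]
    rw [if_neg hcond, mul_zero]
  · refine Finset.prod_eq_zero (Finset.mem_Icc.mpr ⟨h0, hik⟩) ?_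
    have happ : app x i.val = x i := app_val x i
    have hcond : ¬ (b1C m δ ζ ≤ (app x (i.val-1), app q (i.val-1)).1 ∧
        (app x (i.val-1), app q (i.val-1)).1 ≤ b2C m δ ζ ∧
        b1C m δ ζ ≤ (app x i.val, app q i.val).1 ∧ (app x i.val, app q i.val).1 ≤ b2C m δ ζ) := by
      rintro ⟨-, -, ha, hb⟩
      exact hi ⟨by rwa [happ] at ha, by rwa [happ] at hb⟩
    simp only [kerT]
    rw [if_neg hcond, mul_zero]

end Aux6
section Main
variable {m : ℕ} {δ ζ : ℝ}

lemma per_q (hm : 2 ≤ m) (hδ : 0 < δ) (hζ : ζ ∈ Set.Ioc (0:ℝ) (1/10))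
    (k : ℕ) (hk : 1 ≤ k) (q : Fin (k+1) → Label) :
    (∫ x : Fin (k+1) → ℝ,
        ∏ i ∈ Finset.Icc 1 k, kerT m δ ζ (app x (i-1), app q (i-1)) (app x i, app q i))
      ≤ ((chiC m δ - 1/2)^(k+1) / (3*ζ)) *
        ∫ y in Set.univ.pi fun _ : Fin (k+1) => Set.Icc (3*ζ) (1-ζ),
          ∏ i ∈ Finset.Icc 1 k, ker m δ (app y (i-1), app q (i-1)) (app y i, app q i) := by
  obtain ⟨hζ0, hζ1⟩ := hζ
  have h3 : (0:ℝ) < 3*ζ := by linarith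
  have hc := cC_pos hm hδ
  set c : ℝ := chiC m δ - 1/2 with hcdef
  set sy : Set (Fin (k+1) → ℝ) := Set.univ.pi fun _ : Fin (k+1) => Set.Icc (3*ζ) (1-ζ)
    with hsydef
  set F : (Fin (k+1) → ℝ) → ℝ := fun x =>
    ∏ i ∈ Finset.Icc 1 k, kerT m δ ζ (app x (i-1), app q (i-1)) (app x i, app q i) with hFdef
  set G : (Fin (k+1) → ℝ) → ℝ := fun y =>
    ∏ i ∈ Finset.Icc 1 k, ker m δ (app y (i-1), app q (i-1)) (app y i, app q i) with hGdef
  have hsy : MeasurableSet sy := MeasurableSet.univ_pi fun _ => measurableSet_Icc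
  have hymem : ∀ y ∈ sy, ∀ j : ℕ, app y j ∈ Set.Icc (3*ζ) (1-ζ) := by
    intro y hy j
    exact hy _ (Set.mem_univ _)
  have hypos : ∀ y ∈ sy, ∀ i : Fin (k+1), 0 < y i := by
    intro y hy i
    have := hy i (Set.mem_univ i)
    exact lt_of_lt_of_le h3 this.1
  -- the substitution map and its derivative
  set Φ : (Fin (k+1) → ℝ) → (Fin (k+1) → ℝ) := fun y => fun i => psiF m δ (y i) with hΦdef
  set f' : (Fin (k+1) → ℝ) → ((Fin (k+1) → ℝ) →L[ℝ] (Fin (k+1) → ℝ)) := fun y =>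
    ContinuousLinearMap.pi fun i : Fin (k+1) =>
      (-(c * (y i)⁻¹)) • ContinuousLinearMap.proj (R := ℝ) (φ := fun _ : Fin (k+1) => ℝ) i
    with hf'def
  have hderiv : ∀ y ∈ sy, HasFDerivWithinAt Φ (f' y) sy y := by
    intro y hy
    refine (hasFDerivAt_pi.mpr fun i => ?_).hasFDerivWithinAt
    have h := (hasDerivAt_psiF (m := m) (δ := δ) (ne_of_gt (hypos y hy i))).comp_hasFDerivAt y
      (hasFDerivAt_apply (𝕜 := ℝ) (F' := fun _ : Fin (k+1) => ℝ) i y)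
    exact h
  have hinj : Set.InjOn Φ sy := by
    intro a ha b hb hab
    funext i
    have h1 : psiF m δ (a i) = psiF m δ (b i) := congrFun hab i
    have h2 : Real.log (a i) = Real.log (b i) := by
      have := h1
      simp only [psiF] at this
      have := neg_injective this
      exact mul_left_cancel₀ (ne_of_gt hc) this
    calc a i = Real.exp (Real.log (a i)) := (Real.exp_log (hypos a ha i)).symm
    _ = Real.exp (Real.log (b i)) := by rw [h2]
    _ = b i := Real.exp_log (hypos b hb i)
  -- pointwise identity on sy
  have hpoint : ∀ y ∈ sy,
      |(f' y).det| • F (Φ y) = (c^(k+1) / Real.sqrt (app y 0 * app y k)) * G y := by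
    intro y hy
    have hgpos : ∀ j : ℕ, 0 < app y j := fun j => lt_of_lt_of_le h3 (hymem y hy j).1
    have hdet : (f' y).det = ∏ i : Fin (k+1), (-(c * (y i)⁻¹)) := det_pi_smul_proj _
    have habs : |(f' y).det| = ∏ i : Fin (k+1), (c / app y i.val) := by
      rw [hdet, Finset.abs_prod]
      refine Finset.prod_congr rfl fun i _ => ?_
      rw [abs_neg, abs_of_pos (mul_pos hc (inv_pos.mpr (hypos y hy i))), app_val,
        div_eq_mul_inv]
    have hprodc : ∏ i : Fin (k+1), (c / app y i.val)
        = c^(k+1) / ∏ i ∈ Finset.range (k+1), app y i := by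
      rw [Fin.prod_univ_eq_prod_range (fun j => c / app y j) (k+1),
        Finset.prod_div_distrib, Finset.prod_const, Finset.card_range]
    have hF : F (Φ y) = G y * ∏ i ∈ Finset.Icc 1 k, Real.sqrt (app y (i-1) * app y i) := by
      rw [hFdef, hGdef, ← Finset.prod_mul_distrib]
      refine Finset.prod_congr rfl fun i _ => ?_
      have e1 : app (Φ y) (i-1) = psiF m δ (app y (i-1)) := rfl
      have e2 : app (Φ y) i = psiF m δ (app y i) := rfl
      rw [e1, e2]
      exact kerT_psi hm hδ ⟨hζ0, hζ1⟩ (hymem y hy (i-1)) (hymem y hy i) _ _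
    have htel := sqrt_prod_tel (fun j => app y j) hgpos k
    have hsq : 0 < Real.sqrt (app y 0 * app y k) :=
      Real.sqrt_pos.mpr (mul_pos (hgpos 0) (hgpos k))
    have hS : 0 < ∏ i ∈ Finset.Icc 1 k, Real.sqrt (app y (i-1) * app y i) :=
      Finset.prod_pos fun i _ => Real.sqrt_pos.mpr (mul_pos (hgpos _) (hgpos _))
    rw [smul_eq_mul, habs, hprodc, hF, ← htel]
    field_simp
  -- integrability of both sides on sy
  have hfin : volume sy ≠ ∞ :=
    ((isCompact_univ_pi fun _ => isCompact_Icc).measure_lt_top).ne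
  have hGnonneg : ∀ y ∈ sy, 0 ≤ G y := by
    intro y hy
    exact Finset.prod_nonneg fun i _ => ker_nonneg_on hm hδ
      (lt_of_lt_of_le h3 (hymem y hy _).1) (lt_of_lt_of_le h3 (hymem y hy _).1)
  set B : ℝ := (m:ℝ) * ((m:ℝ) + 1 + δ) * 2 / (9*ζ^2) with hBdef
  have hBnonneg : 0 ≤ B := by
    have := hm2R hm
    apply div_nonneg <;> nlinarith
  have hGle : ∀ y ∈ sy, G y ≤ B^k := by
    intro y hy
    calc G y ≤ ∏ _i ∈ Finset.Icc 1 k, B := by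
          refine Finset.prod_le_prod (fun i _ => ker_nonneg_on hm hδ
              (lt_of_lt_of_le h3 (hymem y hy _).1) (lt_of_lt_of_le h3 (hymem y hy _).1))
            (fun i _ => ker_le_on hm hδ ⟨hζ0, hζ1⟩ (hymem y hy _) (hymem y hy _))
    _ = B^k := by rw [Finset.prod_const, Nat.card_Icc]; norm_num
  have int_G : IntegrableOn G sy volume := by
    refine Measure.integrableOn_of_bounded (M := B^k) hfin
      (measurable_kerprod hm hδ k q).aestronglyMeasurable
      ((ae_restrict_iff' hsy).mpr (Filter.Eventually.of_forall fun y hy => ?_))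
    rw [Real.norm_eq_abs, abs_of_nonneg (hGnonneg y hy)]
    exact hGle y hy
  have int_constG : IntegrableOn (fun y => (c^(k+1)/(3*ζ)) * G y) sy volume :=
    int_G.const_mul _
  have hsqge : ∀ y ∈ sy, 3*ζ ≤ Real.sqrt (app y 0 * app y k) := by
    intro y hy
    calc 3*ζ = Real.sqrt ((3*ζ)*(3*ζ)) := (Real.sqrt_mul_self h3.le).symm
    _ ≤ _ := Real.sqrt_le_sqrt
        (mul_le_mul (hymem y hy 0).1 (hymem y hy k).1 h3.le
          (le_trans h3.le (hymem y hy 0).1))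
  have hdivle : ∀ y ∈ sy, c^(k+1) / Real.sqrt (app y 0 * app y k) ≤ c^(k+1)/(3*ζ) := by
    intro y hy
    exact div_le_div_of_nonneg_left (pow_nonneg hc.le _) h3 (hsqge y hy)
  have int_h : IntegrableOn
      (fun y => (c^(k+1) / Real.sqrt (app y 0 * app y k)) * G y) sy volume := by
    refine Measure.integrableOn_of_bounded (M := (c^(k+1)/(3*ζ)) * B^k) hfin
      ((measurable_const.div
        (Real.continuous_sqrt.measurable.comp
          ((measurable_app 0).mul (measurable_app k)))).mul
        (measurable_kerprod hm hδ k q)).aestronglyMeasurable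
      ((ae_restrict_iff' hsy).mpr (Filter.Eventually.of_forall fun y hy => ?_))
    have h1 : 0 ≤ c^(k+1) / Real.sqrt (app y 0 * app y k) :=
      div_nonneg (pow_nonneg hc.le _) (Real.sqrt_nonneg _)
    rw [Real.norm_eq_abs, abs_of_nonneg (mul_nonneg h1 (hGnonneg y hy))]
    exact mul_le_mul (hdivle y hy) (hGle y hy) (hGnonneg y hy)
      (div_nonneg (pow_nonneg hc.le _) h3.le)
  -- main chain
  calc (∫ x : Fin (k+1) → ℝ, F x)
      = ∫ x in Set.univ.pi fun _ : Fin (k+1) => Set.Icc (b1C m δ ζ) (b2C m δ ζ), F x :=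
        (setIntegral_eq_integral_of_forall_compl_eq_zero
          (fun x hx => kerTprod_vanish k hk q hx)).symm
  _ = ∫ y in sy, |(f' y).det| • F (Φ y) := by
        rw [← image_box hm hδ ⟨hζ0, hζ1⟩ k, ← hΦdef, hsydef]
        exact integral_image_eq_integral_abs_det_fderiv_smul volume
          (by rw [← hsydef]; exact hsy) (by rw [← hsydef]; exact hderiv) (by rw [← hsydef]; exact hinj) F
  _ = ∫ y in sy, (c^(k+1) / Real.sqrt (app y 0 * app y k)) * G y :=
        setIntegral_congr_fun hsy hpoint
  _ ≤ ∫ y in sy, (c^(k+1)/(3*ζ)) * G y := by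
        refine setIntegral_mono_on int_h int_constG hsy ?_
        intro y hy
        exact mul_le_mul_of_nonneg_right (hdivle y hy) (hGnonneg y hy)
  _ = (c^(k+1)/(3*ζ)) * ∫ y in sy, G y := by
        rw [integral_const_mul]

end Main
/-- the isometry bound `I_k(ζ) ≥ 3ζ (2/(2χ-1))^{k+1} J_k(ζ)`. -/
theorem isometry_inner_product_bound
    (m : ℕ) (hm : 2 ≤ m) (δ : ℝ) (hδ : 0 < δ) (ζ : ℝ) (hζ : ζ ∈ Set.Ioc (0 : ℝ) (1 / 10)) :
    ∀ k : ℕ, 1 ≤ k →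
      3 * ζ * (2 / (2 * chiC m δ - 1)) ^ (k + 1) * Jker m δ ζ k ≤ Iker m δ ζ k := by
  intro k hk
  obtain ⟨hζ0, hζ1⟩ := hζ
  have h3 : (0:ℝ) < 3*ζ := by linarith
  have hc := cC_pos hm hδ
  have h2 : (2 : ℝ)/(2 * chiC m δ - 1) = (chiC m δ - 1/2)⁻¹ := by
    rw [show 2 * chiC m δ - 1 = 2 * (chiC m δ - 1/2) by ring]
    field_simp
  have hsum : Jker m δ ζ k ≤ ((chiC m δ - 1/2)^(k+1)/(3*ζ)) * Iker m δ ζ k := by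
    rw [Jker, Iker, Finset.mul_sum]
    exact Finset.sum_le_sum fun q _ => per_q hm hδ ⟨hζ0, hζ1⟩ k hk q
  have hA : (0:ℝ) ≤ 3 * ζ * ((chiC m δ - 1/2)⁻¹)^(k+1) :=
    (mul_pos h3 (pow_pos (inv_pos.mpr hc) _)).le
  rw [h2]
  calc 3 * ζ * ((chiC m δ - 1/2)⁻¹)^(k+1) * Jker m δ ζ k
      ≤ 3 * ζ * ((chiC m δ - 1/2)⁻¹)^(k+1) *
          (((chiC m δ - 1/2)^(k+1)/(3*ζ)) * Iker m δ ζ k) :=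
        mul_le_mul_of_nonneg_left hsum hA
  _ = (((chiC m δ - 1/2)⁻¹)^(k+1) * (chiC m δ - 1/2)^(k+1)) * ((3*ζ)/(3*ζ)) *
        Iker m δ ζ k := by ring
  _ = Iker m δ ζ k := by
        rw [← mul_pow, inv_mul_cancel₀ (ne_of_gt hc), one_pow, div_self (ne_of_gt h3),
          one_mul, one_mul]

end PAPaper
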